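/- If Φ = (φ_n) is an almost additive sequence for T with constant C, and δ > 0 is such that d(x,y) < ε/2 implies |φ_1(x) − φ_1(y)| < δ, then P_n(T,Φ,ε) ≤ e^{2nC + nδ} · Q_n(T,Φ,ε/2), where P_n(T,Φ,ε) is the supremum of Σ_{x∈E} e^{φ_n(x)} over all (n,ε)-separated sets E ⊆ X, and Q_n(T,Φ,ε/2) is the infimum of Σ_{x∈F} e^{φ_n(x)} over all (n,ε/2)-spanning sets F ⊆ X. -/
import Mathlib


open Real Set

variable {α : Type*} [MetricSpace α]

noncomputable def dynDist (T : α → α) (n : ℕ) (x y : α) : ℝ :=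
  ⨆ j : Fin n, dist (T^[(j : ℕ)] x) (T^[(j : ℕ)] y)

def IsDynSpanning (T : α → α) (n : ℕ) (ε : ℝ) (F : Finset α) : Prop :=
  ∀ x : α, ∃ y ∈ F, dynDist T n x y < ε

def IsDynSeparated (T : α → α) (n : ℕ) (ε : ℝ) (E : Finset α) : Prop :=
  ∀ x ∈ E, ∀ y ∈ E, x ≠ y → ε < dynDist T n x y

noncomputable def Pdyn (T : α → α) (φ : ℕ → α → ℝ) (n : ℕ) (ε : ℝ) : ℝ :=
  sSup {s | ∃ E : Finset α, IsDynSeparated T n ε E ∧ s = ∑ x ∈ E, Real.exp (φ n x)}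

noncomputable def Qdyn (T : α → α) (φ : ℕ → α → ℝ) (n : ℕ) (ε : ℝ) : ℝ :=
  sInf {s | ∃ F : Finset α, IsDynSpanning T n ε F ∧ s = ∑ x ∈ F, Real.exp (φ n x)}

/-- `φ` is an almost additive sequence (of continuous functions) for `T` with constant `C`. -/
def AlmostAdditive (T : α → α) (φ : ℕ → α → ℝ) (C : ℝ) : Prop :=
  (∀ n, Continuous (φ n)) ∧
  ∀ n m : ℕ, 1 ≤ n → 1 ≤ m → ∀ x : α,
    -C + φ n x + φ m (T^[n] x) ≤ φ (n + m) x ∧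
    φ (n + m) x ≤ φ n x + φ m (T^[n] x) + C

/-- The refined cover `⋁_{i=0}^{n-1} T^{-i} A`. -/
def dynRefine (T : α → α) (n : ℕ) (A : Finset (Set α)) : Set (Set α) :=
  {B | ∃ f : ℕ → Set α, (∀ i < n, f i ∈ A) ∧ B = ⋂ i ∈ Finset.range n, (T^[i]) ⁻¹' (f i)}

/-- Minimal cardinality of a subcover of `γ`. -/
noncomputable def coverN (γ : Set (Set α)) : ℕ :=
  sInf {k | ∃ β : Finset (Set α), ↑β ⊆ γ ∧ ⋃₀ (↑β : Set (Set α)) = Set.univ ∧ β.card = k}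

noncomputable def qcov (T : α → α) (φ : ℕ → α → ℝ) (n : ℕ) (A : Finset (Set α)) : ℝ :=
  sInf {s | ∃ β : Finset (Set α), ↑β ⊆ dynRefine T n A ∧ ⋃₀ (↑β : Set (Set α)) = Set.univ ∧
    s = ∑ B ∈ β, sInf ((fun x => Real.exp (φ n x)) '' B)}

noncomputable def pcov (T : α → α) (φ : ℕ → α → ℝ) (n : ℕ) (A : Finset (Set α)) : ℝ :=
  sInf {s | ∃ β : Finset (Set α), ↑β ⊆ dynRefine T n A ∧ ⋃₀ (↑β : Set (Set α)) = Set.univ ∧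
    s = ∑ B ∈ β, sSup ((fun x => Real.exp (φ n x)) '' B)}
lemma dist_le_dynDist (T : α → α) {n j : ℕ} (hj : j < n) (x y : α) :
    dist (T^[j] x) (T^[j] y) ≤ dynDist T n x y :=
  le_ciSup (f := fun j : Fin n => dist (T^[(j : ℕ)] x) (T^[(j : ℕ)] y))
    (Set.Finite.bddAbove (Set.finite_range _)) ⟨j, hj⟩

lemma dynDist_lt (T : α → α) {n : ℕ} (hn : 1 ≤ n) {x y : α} {ε : ℝ}
    (h : ∀ j < n, dist (T^[j] x) (T^[j] y) < ε) : dynDist T n x y < ε := by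
  haveI : Nonempty (Fin n) := ⟨⟨0, hn⟩⟩
  obtain ⟨j0, hj0⟩ := Finite.exists_max (fun j : Fin n => dist (T^[(j : ℕ)] x) (T^[(j : ℕ)] y))
  calc dynDist T n x y ≤ dist (T^[(j0 : ℕ)] x) (T^[(j0 : ℕ)] y) := ciSup_le hj0
    _ < ε := h _ j0.2

lemma dynDist_comm (T : α → α) (n : ℕ) (x y : α) :
    dynDist T n x y = dynDist T n y x := by
  unfold dynDist; simp [dist_comm]

lemma dynDist_triangle (T : α → α) {n : ℕ} (hn : 1 ≤ n) (x y z : α) :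
    dynDist T n x z ≤ dynDist T n x y + dynDist T n y z := by
  haveI : Nonempty (Fin n) := ⟨⟨0, hn⟩⟩
  refine ciSup_le fun j => (dist_triangle _ (T^[(j : ℕ)] y) _).trans ?_
  exact add_le_add (dist_le_dynDist T j.2 x y) (dist_le_dynDist T j.2 y z)

lemma phi_upper {T : α → α} {φ : ℕ → α → ℝ} {C : ℝ} (hφ : AlmostAdditive T φ C) :
    ∀ n, 1 ≤ n → ∀ x, φ n x ≤ ∑ j ∈ Finset.range n, φ 1 (T^[j] x) + ((n : ℝ) - 1) * C := by
  intro n hn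
  induction n, hn using Nat.le_induction with
  | base => intro x; simp
  | succ n hn ih =>
    intro x
    have h1 := ((hφ.2 n 1 hn le_rfl x).2)
    have h2 := ih x
    rw [Finset.sum_range_succ]
    push_cast
    linarith

lemma phi_lower {T : α → α} {φ : ℕ → α → ℝ} {C : ℝ} (hφ : AlmostAdditive T φ C) :
    ∀ n, 1 ≤ n → ∀ x, ∑ j ∈ Finset.range n, φ 1 (T^[j] x) ≤ φ n x + ((n : ℝ) - 1) * C := by
  intro n hn
  induction n, hn using Nat.le_induction with
  | base => intro x; simp
  | succ n hn ih =>
    intro x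
    have h1 := ((hφ.2 n 1 hn le_rfl x).1)
    have h2 := ih x
    rw [Finset.sum_range_succ]
    push_cast
    linarith

lemma exists_dyn_spanning {X : Type*} [MetricSpace X] [CompactSpace X]
    (T : X → X) (hT : Continuous T) {n : ℕ} (hn : 1 ≤ n) {ε : ℝ} (hε : 0 < ε) :
    ∃ F : Finset X, IsDynSpanning T n ε F := by
  set V : X → Set X := fun c => ⋂ j ∈ Finset.range n, (T^[j]) ⁻¹' Metric.ball (T^[j] c) ε with hV
  have hVopen : ∀ c, IsOpen (V c) := fun c =>
    isOpen_biInter_finset fun j _ => (Metric.isOpen_ball).preimage (hT.iterate j)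
  have hcover : (Set.univ : Set X) ⊆ ⋃ c, V c := by
    intro x _
    refine Set.mem_iUnion.2 ⟨x, ?_⟩
    simp [hV, hε]
  obtain ⟨t, ht⟩ := isCompact_univ.elim_finite_subcover V hVopen hcover
  refine ⟨t, fun x => ?_⟩
  obtain ⟨c, hc, hxc⟩ := Set.mem_iUnion₂.1 (ht (Set.mem_univ x))
  refine ⟨c, hc, dynDist_lt T hn fun j hj => ?_⟩
  have : x ∈ (T^[j]) ⁻¹' Metric.ball (T^[j] c) ε := by
    have := Set.mem_iInter₂.1 hxc j (Finset.mem_range.2 hj)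
    exact this
  rw [Set.mem_preimage, Metric.mem_ball] at this
  exact this

theorem separated_le_spanning_bound {X : Type*} [MetricSpace X] [CompactSpace X]
    (T : X → X) (hT : Continuous T) (φ : ℕ → X → ℝ) (C : ℝ) (hC : 0 < C)
    (hφ : AlmostAdditive T φ C) (ε δ : ℝ) (hε : 0 < ε) (hδ : 0 < δ)
    (h : ∀ x y : X, dist x y < ε / 2 → |φ 1 x - φ 1 y| < δ) (n : ℕ) (hn : 1 ≤ n) :
    Pdyn T φ n ε ≤ Real.exp (2 * (n : ℝ) * C + (n : ℝ) * δ) * Qdyn T φ n (ε / 2) := by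
  set K : ℝ := 2 * (n : ℝ) * C + (n : ℝ) * δ with hK
  -- pointwise bound
  have pointwise : ∀ x y : X, dynDist T n x y < ε / 2 → φ n x ≤ φ n y + K := by
    intro x y hd
    have h1 := phi_upper hφ n hn x
    have h2 := phi_lower hφ n hn y
    have h3 : ∑ j ∈ Finset.range n, φ 1 (T^[j] x) ≤
        ∑ j ∈ Finset.range n, φ 1 (T^[j] y) + (n : ℝ) * δ := by
      have : ∑ j ∈ Finset.range n, φ 1 (T^[j] x) ≤
          ∑ j ∈ Finset.range n, (φ 1 (T^[j] y) + δ) := by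
        refine Finset.sum_le_sum fun j hj => ?_
        have hjd : dist (T^[j] x) (T^[j] y) < ε / 2 :=
          lt_of_le_of_lt (dist_le_dynDist T (Finset.mem_range.1 hj) x y) hd
        have := h _ _ hjd
        have := abs_lt.1 this
        linarith [this.2]
      simpa [Finset.sum_add_distrib, mul_comm] using this
    have hCn : ((n : ℝ) - 1) * C ≤ (n : ℝ) * C := by
      have : (0 : ℝ) ≤ C := hC.le
      nlinarith
    rw [hK]; linarith
  -- key estimate between separated and spanning sums
  have key : ∀ (E F : Finset X), IsDynSeparated T n ε E → IsDynSpanning T n (ε / 2) F →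
      ∑ x ∈ E, Real.exp (φ n x) ≤ Real.exp K * ∑ y ∈ F, Real.exp (φ n y) := by
    intro E F hE hF
    classical
    choose g hgF hgd using hF
    have hinj : Set.InjOn g (E : Set X) := by
      intro x₁ h₁ x₂ h₂ hgeq
      by_contra hne
      have hsep := hE x₁ h₁ x₂ h₂ hne
      have htri : dynDist T n x₁ x₂ ≤ dynDist T n x₁ (g x₁) + dynDist T n (g x₂) x₂ := by
        rw [hgeq]
        exact dynDist_triangle T hn x₁ (g x₂) x₂
      have h2' : dynDist T n (g x₂) x₂ < ε / 2 := by
        rw [dynDist_comm]; exact hgd x₂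
      linarith [hgd x₁]
    calc ∑ x ∈ E, Real.exp (φ n x)
        ≤ ∑ x ∈ E, Real.exp K * Real.exp (φ n (g x)) := by
          refine Finset.sum_le_sum fun x _ => ?_
          rw [← Real.exp_add]
          exact Real.exp_le_exp.2 (by linarith [pointwise x (g x) (hgd x)])
      _ = Real.exp K * ∑ x ∈ E, Real.exp (φ n (g x)) := by rw [Finset.mul_sum]
      _ ≤ Real.exp K * ∑ y ∈ F, Real.exp (φ n y) := by
          refine mul_le_mul_of_nonneg_left ?_ (Real.exp_pos K).le
          rw [show ∑ x ∈ E, Real.exp (φ n (g x)) = ∑ y ∈ E.image g, Real.exp (φ n y) from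
            (Finset.sum_image (f := fun y => Real.exp (φ n y)) (fun x hx y hy => hinj hx hy)).symm]
          exact Finset.sum_le_sum_of_subset_of_nonneg
            (fun y hy => by
              obtain ⟨x, hx, rfl⟩ := Finset.mem_image.1 hy
              exact hgF x)
            (fun _ _ _ => (Real.exp_pos _).le)
  -- Qdyn set nonempty and nonneg
  obtain ⟨F0, hF0⟩ := exists_dyn_spanning T hT hn (by linarith : (0:ℝ) < ε / 2)
  have hQne : {s | ∃ F : Finset X, IsDynSpanning T n (ε/2) F ∧
      s = ∑ x ∈ F, Real.exp (φ n x)}.Nonempty := ⟨_, F0, hF0, rfl⟩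
  have hQnonneg : 0 ≤ Qdyn T φ n (ε / 2) := by
    refine Real.sInf_nonneg fun s hs => ?_
    obtain ⟨F, _, rfl⟩ := hs
    exact Finset.sum_nonneg fun _ _ => (Real.exp_pos _).le
  refine Real.sSup_le ?_ (by positivity)
  rintro s ⟨E, hE, rfl⟩
  rw [← div_le_iff₀' (Real.exp_pos K)]
  refine le_csInf hQne ?_
  rintro q ⟨F, hF, rfl⟩
  rw [div_le_iff₀' (Real.exp_pos K)]
  exact key E F hE hF
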